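/- Let p be a prime and A ⊆ {1, ..., ⌊p/2⌋ - 1} with A disjoint from A + A + {0, 1}. Suppose m ≥ 3 is an integer, q ≥ 2p. Fix the mixed-radix base b with b i = q^i - 1 for odd i and b i = p for even i. Then there exist k ≥ 0, integers x 1, ..., x k, y 1, ..., y k, z with 0 ≤ x i < q^{2i-1} - 1, 0 ≤ y i < 2p, and 3 ≤ z ≤ 6*p*q^{2k+1}, such that m = z * Π_{j=1}^{2k} b j + Σ_{i=1}^{k} (x i * Π_{j<2i-1} b j + y i * Π_{j<2i} b j), provided additionally that for every residue r mod p there exists 0 ≤ y < 2p with y ≡ r (mod p) and {y-2, y-1, y} ⊆ A + A + A. -/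
import Mathlib


open Pointwise

/-- The mixed-radix base: `b i = q^i - 1` for odd `i`, `b i = p` for even `i`. -/
def mixedBase (q p : ℕ) (i : ℕ) : ℤ := if Odd i then (q : ℤ) ^ i - 1 else (p : ℤ)

/-- Product of the first `n` base elements. -/
def basePow (q p n : ℕ) : ℤ := ∏ j ∈ Finset.Icc 1 n, mixedBase q p j

/-- Shifted base product: product of `mixedBase` over indices `2t+1, …, 2t+n`. -/
def PP (q p t n : ℕ) : ℤ := ∏ j ∈ Finset.range n, mixedBase q p (2 * t + 1 + j)

lemma mixedBase_odd (q p t : ℕ) : mixedBase q p (2 * t + 1) = (q : ℤ) ^ (2 * t + 1) - 1 := by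
  rw [mixedBase, if_pos]
  rw [Nat.odd_iff]; omega

lemma mixedBase_even (q p t : ℕ) : mixedBase q p (2 * t + 2) = (p : ℤ) := by
  rw [mixedBase, if_neg]
  rw [Nat.odd_iff]; omega

lemma PP_zero (q p t : ℕ) : PP q p t 0 = 1 := by simp [PP]

lemma PP_one (q p t : ℕ) : PP q p t 1 = (q : ℤ) ^ (2 * t + 1) - 1 := by
  simp [PP, mixedBase_odd]

lemma PP_succ2 (q p t n : ℕ) :
    PP q p t (n + 2) = ((q : ℤ) ^ (2 * t + 1) - 1) * (p : ℤ) * PP q p (t + 1) n := by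
  unfold PP
  rw [Finset.prod_range_succ', Finset.prod_range_succ']
  have h0 : mixedBase q p (2 * t + 1 + 0) = (q : ℤ) ^ (2 * t + 1) - 1 := by
    simpa using mixedBase_odd q p t
  have h1 : mixedBase q p (2 * t + 1 + (0 + 1)) = (p : ℤ) := by
    have : 2 * t + 1 + (0 + 1) = 2 * t + 2 := by omega
    rw [this, mixedBase_even]
  rw [h0, h1]
  have h2 : ∀ j ∈ Finset.range n,
      mixedBase q p (2 * t + 1 + (j + 1 + 1)) = mixedBase q p (2 * (t + 1) + 1 + j) := by
    intro j _; congr 1; omega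
  rw [Finset.prod_congr rfl h2]
  ring

lemma basePow_eq_PP (q p n : ℕ) : basePow q p n = PP q p 0 n := by
  unfold basePow PP
  rw [← Finset.Ico_add_one_right_eq_Icc, Finset.prod_Ico_eq_prod_range]
  simp

lemma aux_key (p q : ℕ) (hp : 2 ≤ p) (hq : 2 * p ≤ q) (A : Set ℤ)
    (hres : ∀ r : ℤ, ∃ y : ℤ, 0 ≤ y ∧ y < 2 * p ∧ y ≡ r [ZMOD p] ∧
      ({y - 2, y - 1, y} : Set ℤ) ⊆ A + A + A) :
    ∀ N : ℕ, ∀ m : ℤ, m.toNat ≤ N → 3 ≤ m → ∀ t : ℕ,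
    ∃ (k : ℕ) (x y : ℕ → ℤ) (z : ℤ),
      (∀ i ∈ Finset.Icc 1 k, 0 ≤ x i ∧ x i < (q : ℤ) ^ (2 * (t + i) - 1) - 1) ∧
      (∀ i ∈ Finset.Icc 1 k, 0 ≤ y i ∧ y i < 2 * p ∧
        ({y i - 2, y i - 1, y i} : Set ℤ) ⊆ A + A + A) ∧
      3 ≤ z ∧ z ≤ 6 * p * (q : ℤ) ^ (2 * (t + k) + 1) ∧
      m = z * PP q p t (2 * k)
          + ∑ i ∈ Finset.Icc 1 k,
              (x i * PP q p t (2 * i - 2) + y i * PP q p t (2 * i - 1)) := by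
  intro N
  induction N with
  | zero => intro m hmN hm t; omega
  | succ N ih =>
    intro m hmN hm t
    have hq4 : (4 : ℤ) ≤ (q : ℤ) := by
      have : (4 : ℕ) ≤ q := by omega
      exact_mod_cast this
    have hqb : (q : ℤ) ≤ (q : ℤ) ^ (2 * t + 1) := by
      exact le_self_pow₀ (by linarith) (by omega)
    have hb3 : (3 : ℤ) ≤ (q : ℤ) ^ (2 * t + 1) - 1 := by linarith
    by_cases hcase : m ≤ 6 * p * (q : ℤ) ^ (2 * t + 1)
    · refine ⟨0, 0, 0, m, by simp, by simp, hm, ?_, by simp [PP_zero]⟩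
      simpa using hcase
    · push_neg at hcase
      set b : ℤ := (q : ℤ) ^ (2 * t + 1) - 1 with hbdef
      have hbpos : (0 : ℤ) < b := by linarith
      set x : ℤ := m % b with hxdef
      set n : ℤ := m / b with hndef
      have hx0 : 0 ≤ x := Int.emod_nonneg m (by linarith)
      have hxb : x < b := Int.emod_lt_of_pos m hbpos
      have hmbn : m = b * n + x := by
        rw [hxdef, hndef]; exact (Int.mul_ediv_add_emod m b).symm
      obtain ⟨y, hy0, hy2p, hymod, hyA⟩ := hres n
      have hdvd : (p : ℤ) ∣ n - y := hymod.dvd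
      obtain ⟨m', hm'⟩ := hdvd
      have hpm' : (p : ℤ) * m' = n - y := hm'.symm
      have hp2 : (2 : ℤ) ≤ (p : ℤ) := by exact_mod_cast hp
      have hn6p : 6 * (p : ℤ) ≤ n := by
        by_contra h
        push_neg at h
        have hn1 : n ≤ 6 * (p : ℤ) - 1 := by omega
        have : b * n ≤ b * (6 * (p : ℤ) - 1) :=
          mul_le_mul_of_nonneg_left hn1 (le_of_lt hbpos)
        nlinarith
      have hm'3 : 3 ≤ m' := by
        by_contra h
        push_neg at h
        have hm2 : m' ≤ 2 := by omega
        have : (p : ℤ) * m' ≤ (p : ℤ) * 2 := by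
          apply mul_le_mul_of_nonneg_left hm2 (by linarith)
        nlinarith
      have hm'ltm : m' < m := by
        have h1 : m' ≤ n := by nlinarith
        have h2 : n < m := by nlinarith
        linarith
      obtain ⟨k', x', y', z, hx', hy', hz3, hzB, heq⟩ :=
        ih m' (by omega) hm'3 (t + 1)
      refine ⟨k' + 1, fun i => if i = 1 then x else x' (i - 1),
        fun i => if i = 1 then y else y' (i - 1), z, ?_, ?_, hz3, ?_, ?_⟩
      · intro i hi
        simp only [Finset.mem_Icc] at hi
        by_cases h1 : i = 1
        · subst h1
          simp only [if_pos rfl]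
          have : 2 * (t + 1) - 1 = 2 * t + 1 := by omega
          rw [this]
          exact ⟨hx0, hxb⟩
        · simp only [if_neg h1]
          have := hx' (i - 1) (by simp only [Finset.mem_Icc]; omega)
          have e : 2 * (t + 1 + (i - 1)) - 1 = 2 * (t + i) - 1 := by omega
          rwa [e] at this
      · intro i hi
        simp only [Finset.mem_Icc] at hi
        by_cases h1 : i = 1
        · subst h1; simp only [if_pos rfl]; exact ⟨hy0, hy2p, hyA⟩
        · simp only [if_neg h1]
          exact hy' (i - 1) (by simp only [Finset.mem_Icc]; omega)
      · have e : 2 * (t + 1 + k') + 1 = 2 * (t + (k' + 1)) + 1 := by omega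
        rwa [e] at hzB
      · -- the main equation
        have key : m = b * (p : ℤ) * m' + y * b + x := by
          have hn' : n = (p : ℤ) * m' + y := by linarith
          calc m = b * n + x := hmbn
            _ = b * ((p : ℤ) * m' + y) + x := by rw [← hn']
            _ = b * (p : ℤ) * m' + y * b + x := by ring
        have heq' : m' = z * PP q p (t + 1) (2 * k')
            + ∑ j ∈ Finset.range k',
                (x' (j + 1) * PP q p (t + 1) (2 * j) +
                 y' (j + 1) * PP q p (t + 1) (2 * j + 1)) := by
          rw [heq]
          congr 1
          rw [← Finset.Ico_add_one_right_eq_Icc, Finset.sum_Ico_eq_sum_range]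
          have hk : k' + 1 - 1 = k' := by omega
          rw [hk]
          apply Finset.sum_congr rfl
          intro j _
          have e1 : 2 * (1 + j) - 2 = 2 * j := by omega
          have e2 : 2 * (1 + j) - 1 = 2 * j + 1 := by omega
          have e3 : 1 + j = j + 1 := by omega
          rw [e1, e2, e3]
        have hS : ∑ i ∈ Finset.Icc 1 (k' + 1),
              ((if i = 1 then x else x' (i - 1)) * PP q p t (2 * i - 2)
               + (if i = 1 then y else y' (i - 1)) * PP q p t (2 * i - 1))
            = b * (p : ℤ) * (∑ j ∈ Finset.range k',
                (x' (j + 1) * PP q p (t + 1) (2 * j) +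
                 y' (j + 1) * PP q p (t + 1) (2 * j + 1))) + (x + y * b) := by
          rw [← Finset.Ico_add_one_right_eq_Icc, Finset.sum_Ico_eq_sum_range]
          have hk : k' + 1 + 1 - 1 = k' + 1 := by omega
          rw [hk, Finset.sum_range_succ', Finset.mul_sum]
          congr 1
          · apply Finset.sum_congr rfl
            intro j _
            have h1 : ¬(1 + (j + 1) = 1) := by omega
            rw [if_neg h1, if_neg h1]
            have e1 : 2 * (1 + (j + 1)) - 2 = 2 * j + 2 := by omega
            have e2 : 2 * (1 + (j + 1)) - 1 = (2 * j + 1) + 2 := by omega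
            have e3 : 1 + (j + 1) - 1 = j + 1 := by omega
            rw [e1, e2, e3, PP_succ2, PP_succ2]
            rw [← hbdef]
            ring
          · have h1 : (1 : ℕ) + 0 = 1 := by omega
            rw [h1, if_pos rfl, if_pos rfl]
            have e1 : 2 * 1 - 2 = 0 := by omega
            have e2 : 2 * 1 - 1 = 1 := by omega
            rw [e1, e2, PP_zero, PP_one, ← hbdef]
            ring
        have e : 2 * (k' + 1) = 2 * k' + 2 := by omega
        rw [e, PP_succ2, ← hbdef, hS, key, heq']
        ring

theorem stmt_9 (p q : ℕ) (hp : p.Prime) (hq : 2 * p ≤ q) (A : Set ℤ)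
    (hA : A ⊆ Set.Icc 1 ((p : ℤ) / 2 - 1))
    (hdisj : Disjoint A (A + A + ({0, 1} : Set ℤ)))
    (hres : ∀ r : ℤ, ∃ y : ℤ, 0 ≤ y ∧ y < 2 * p ∧ y ≡ r [ZMOD p] ∧
      ({y - 2, y - 1, y} : Set ℤ) ⊆ A + A + A)
    (m : ℤ) (hm : 3 ≤ m) :
    ∃ (k : ℕ) (x y : ℕ → ℤ) (z : ℤ),
      (∀ i ∈ Finset.Icc 1 k, 0 ≤ x i ∧ x i < (q : ℤ) ^ (2 * i - 1) - 1) ∧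
      (∀ i ∈ Finset.Icc 1 k, 0 ≤ y i ∧ y i < 2 * p ∧
        ({y i - 2, y i - 1, y i} : Set ℤ) ⊆ A + A + A) ∧
      3 ≤ z ∧ z ≤ 6 * p * (q : ℤ) ^ (2 * k + 1) ∧
      m = z * basePow q p (2 * k)
          + ∑ i ∈ Finset.Icc 1 k,
              (x i * basePow q p (2 * i - 2) + y i * basePow q p (2 * i - 1)) := by
  obtain ⟨k, x, y, z, hx, hy, hz3, hzB, heq⟩ :=
    aux_key p q hp.two_le hq A hres m.toNat m le_rfl hm 0
  refine ⟨k, x, y, z, ?_, hy, hz3, ?_, ?_⟩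
  · intro i hi
    have := hx i hi
    have e : 2 * (0 + i) - 1 = 2 * i - 1 := by omega
    rwa [e] at this
  · have e : 2 * (0 + k) + 1 = 2 * k + 1 := by omega
    rwa [e] at hzB
  · rw [heq]
    congr 1
    · rw [basePow_eq_PP]
    · apply Finset.sum_congr rfl
      intro i _
      rw [basePow_eq_PP, basePow_eq_PP]
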